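/- For k ∈ (0,1) and u ∈ (π/2, π), define f_u(u,k) = sin u·√(1 − k² sin² u) − cos u·(2E(u,k) − F(u,k)). On the zero set {f_u = 0} with u ∈ (π/2, π), the partial derivative ∂f_u/∂u equals √(1 − k² sin² u)·sin² u / cos u and is strictly negative. -/

import Mathlib

open intervalIntegral

/-- Incomplete elliptic integral of the first kind. -/
noncomputable def ellF (u k : ℝ) : ℝ :=
  ∫ t in (0:ℝ)..u, 1 / Real.sqrt (1 - k ^ 2 * Real.sin t ^ 2)

/-- Incomplete elliptic integral of the second kind. -/
noncomputable def ellE (u k : ℝ) : ℝ :=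
  ∫ t in (0:ℝ)..u, Real.sqrt (1 - k ^ 2 * Real.sin t ^ 2)

/-- The function `f_u(u,k) = sin u·√(1 − k² sin²u) − cos u·(2E(u,k) − F(u,k))`. -/
noncomputable def fu (u k : ℝ) : ℝ :=
  Real.sin u * Real.sqrt (1 - k ^ 2 * Real.sin u ^ 2)
    - Real.cos u * (2 * ellE u k - ellF u k)

/-!
Differentiating, all terms containing `√(1 − k² sin² u)` cancel, since
`sin u · d/du √(1 − k² sin² u) = cos u · (√(1 − k² sin² u) − 1/√(1 − k² sin² u))`;
what remains is `∂f_u/∂u = sin u · (2E − F)`. On the zero set `2E − F = sin u · √(1 − k² sin² u) / cos u`,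
and the sign is that of `cos u < 0`.
-/

open Real

lemma one_sub_sq_mul_sin_sq_pos {k : ℝ} (hk : k ^ 2 < 1) (t : ℝ) :
    0 < 1 - k ^ 2 * sin t ^ 2 := by
  nlinarith [sin_sq_le_one t, sq_nonneg k, sq_nonneg (sin t)]

lemma continuous_sqrt_one_sub_sq_mul_sin_sq (k : ℝ) :
    Continuous fun t => √(1 - k ^ 2 * sin t ^ 2) := by
  fun_prop

lemma hasDerivAt_ellE (k u : ℝ) :
    HasDerivAt (fun v => ellE v k) (√(1 - k ^ 2 * sin u ^ 2)) u :=
  have hc := continuous_sqrt_one_sub_sq_mul_sin_sq k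
  integral_hasDerivAt_right (hc.intervalIntegrable 0 u) (hc.stronglyMeasurableAtFilter _ _)
    hc.continuousAt

lemma hasDerivAt_ellF {k : ℝ} (hk : k ^ 2 < 1) (u : ℝ) :
    HasDerivAt (fun v => ellF v k) (1 / √(1 - k ^ 2 * sin u ^ 2)) u :=
  have hc : Continuous fun t => 1 / √(1 - k ^ 2 * sin t ^ 2) :=
    continuous_const.div (continuous_sqrt_one_sub_sq_mul_sin_sq k)
      fun t => (sqrt_pos.mpr (one_sub_sq_mul_sin_sq_pos hk t)).ne'
  integral_hasDerivAt_right (hc.intervalIntegrable 0 u) (hc.stronglyMeasurableAtFilter _ _)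
    hc.continuousAt

lemma hasDerivAt_sqrt_one_sub_sq_mul_sin_sq {k : ℝ} (hk : k ^ 2 < 1) (u : ℝ) :
    HasDerivAt (fun v => √(1 - k ^ 2 * sin v ^ 2))
      (-(k ^ 2 * sin u * cos u) / √(1 - k ^ 2 * sin u ^ 2)) u := by
  have h : HasDerivAt (fun v => 1 - k ^ 2 * sin v ^ 2) (-(k ^ 2 * (2 * sin u * cos u))) u := by
    simpa using (((hasDerivAt_sin u).pow 2).const_mul (k ^ 2)).const_sub 1
  convert h.sqrt (one_sub_sq_mul_sin_sq_pos hk u).ne' using 1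
  field_simp

lemma hasDerivAt_fu {k : ℝ} (hk : k ^ 2 < 1) (u : ℝ) :
    HasDerivAt (fun v => fu v k) (sin u * (2 * ellE u k - ellF u k)) u := by
  have h := ((hasDerivAt_sin u).mul (hasDerivAt_sqrt_one_sub_sq_mul_sin_sq hk u)).sub
    ((hasDerivAt_cos u).mul (((hasDerivAt_ellE k u).const_mul 2).sub (hasDerivAt_ellF hk u)))
  refine h.congr_deriv ?_
  have hΔ := one_sub_sq_mul_sin_sq_pos hk u
  have hsq : √(1 - k ^ 2 * sin u ^ 2) ^ 2 = 1 - k ^ 2 * sin u ^ 2 := sq_sqrt hΔ.le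
  simp only [Pi.sub_apply]
  field_simp
  linear_combination (-cos u) * hsq

theorem fu_partial_u
    (k : ℝ) (hk : k ∈ Set.Ioo (0:ℝ) 1)
    (u : ℝ) (hu : u ∈ Set.Ioo (Real.pi / 2) Real.pi)
    (hzero : fu u k = 0) :
    HasDerivAt (fun v => fu v k)
      (Real.sqrt (1 - k ^ 2 * Real.sin u ^ 2) * Real.sin u ^ 2 / Real.cos u) u ∧
    Real.sqrt (1 - k ^ 2 * Real.sin u ^ 2) * Real.sin u ^ 2 / Real.cos u < 0 := by
  have hk2 : k ^ 2 < 1 := by nlinarith [hk.1, hk.2]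
  have hcos : cos u < 0 := cos_neg_of_pi_div_two_lt_of_lt hu.1 (by linarith [hu.2, pi_pos])
  have hsin : 0 < sin u := sin_pos_of_pos_of_lt_pi (by linarith [hu.1, pi_pos]) hu.2
  have h2EF : 2 * ellE u k - ellF u k = sin u * √(1 - k ^ 2 * sin u ^ 2) / cos u := by
    rw [eq_div_iff hcos.ne]
    unfold fu at hzero
    linarith
  refine ⟨?_, div_neg_of_pos_of_neg ?_ hcos⟩
  · convert hasDerivAt_fu hk2 u using 1
    rw [h2EF]
    ring
  · have := sqrt_pos.mpr (one_sub_sq_mul_sin_sq_pos hk2 u)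
    positivity
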